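/- Let F ∈ (Z/2)[[x]] be F = Σ_{k≥0} x^{(2k+1)^2} and G = F(x^3). Then F is algebraic of degree 4 over the field (Z/2)(G) = Frac((Z/2)[G]), i.e., the polynomial (X+G)^4 − XG ∈ (Z/2)(G)[X] is the minimal polynomial of F, and it is irreducible over (Z/2)(G). -/

import Mathlib

/-!
The coefficient of `xⁿ` in `F·G` is the parity of the number of representations
`n = a² + 3b²` with `a`, `b` odd. Multiplying `a + b√-3` by a sixth root of unity `(1 ± √-3)/2`
is an involution on these representations whose only fixed points are `a = b` and `a = 3b`; they
occur exactly when `n = 4m²` or `n = 12m²` with `m` odd. Hence `FG = F⁴ + G⁴ = (F + G)⁴`.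

As `G` has zero constant term it is transcendental, so `(Z/2)(G)` is a rational function field in
`t = G`. The polynomial `(X + t)⁴ - Xt` is monic over `(Z/2)[t]` and specialises at `t = 1` to
`X⁴ + X + 1`, which is irreducible over `Z/2`; by Gauss's lemma it is irreducible over `(Z/2)(t)`.
-/

open scoped Classical

noncomputable def F : PowerSeries (ZMod 2) :=
  PowerSeries.mk fun n => if ∃ k, n = (2 * k + 1) ^ 2 then 1 else 0

noncomputable def G : PowerSeries (ZMod 2) :=
  PowerSeries.mk fun n => if ∃ k, n = 3 * (2 * k + 1) ^ 2 then 1 else 0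

/-- The field of fractions of `(Z/2)[[x]]`. -/
noncomputable abbrev K : Type := FractionRing (PowerSeries (ZMod 2))

noncomputable def F' : K := algebraMap (PowerSeries (ZMod 2)) K F
noncomputable def G' : K := algebraMap (PowerSeries (ZMod 2)) K G

/-- The subfield `(Z/2)(G)` of `K` (note `Z/2` is the prime field, so it is
contained in every subfield). -/
noncomputable def E : Subfield K := Subfield.closure {G'}

noncomputable def g : E := ⟨G', Subfield.subset_closure rfl⟩

section PowerSeries

open PowerSeries

theorem PowerSeries.pow_card_eq_expand {K : Type*} [Field K] [Fintype K] (φ : K⟦X⟧) :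
    φ ^ Fintype.card K = expand (Fintype.card K) Fintype.card_ne_zero φ := by
  ext n
  rw [coeff_expand, ← coeff_coe_trunc_of_lt n.lt_succ_self, ← trunc_trunc_pow,
    coeff_coe_trunc_of_lt n.lt_succ_self, ← Polynomial.coe_pow, Polynomial.coeff_coe,
    ← FiniteField.expand_card, Polynomial.coeff_expand Fintype.card_pos]
  split_ifs
  · rw [← Polynomial.coeff_coe]
    exact coeff_coe_trunc_of_lt ((Nat.div_le_self _ _).trans_lt n.lt_succ_self)
  · rfl

theorem PowerSeries.coeff_pow_four_zmod_two (φ : (ZMod 2)⟦X⟧) (n : ℕ) :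
    coeff n (φ ^ 4) = if 4 ∣ n then coeff (n / 4) φ else 0 := by
  have h (ψ : (ZMod 2)⟦X⟧) : ψ ^ 2 = expand 2 two_ne_zero ψ := by
    simpa [ZMod.card] using pow_card_eq_expand ψ
  rw [show 4 = 2 * 2 from rfl, pow_mul, h, h, ← expand_mul, coeff_expand]

theorem coeff_F_pow_four (n : ℕ) :
    coeff n (F ^ 4) = if ∃ k, n = 4 * (2 * k + 1) ^ 2 then 1 else 0 := by
  rw [coeff_pow_four_zmod_two, F, coeff_mk]
  by_cases h4 : 4 ∣ n
  · obtain ⟨m, rfl⟩ := h4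
    simp only [dvd_mul_right, if_true, Nat.mul_div_cancel_left _ four_pos,
      mul_right_inj' four_ne_zero]
  · rw [if_neg h4, if_neg]
    rintro ⟨k, rfl⟩
    exact h4 (dvd_mul_right _ _)

theorem coeff_G_pow_four (n : ℕ) :
    coeff n (G ^ 4) = if ∃ k, n = 12 * (2 * k + 1) ^ 2 then 1 else 0 := by
  rw [coeff_pow_four_zmod_two, G, coeff_mk]
  by_cases h4 : 4 ∣ n
  · obtain ⟨m, rfl⟩ := h4
    simp only [dvd_mul_right, if_true, Nat.mul_div_cancel_left _ four_pos,
      show 12 = 4 * 3 from rfl, mul_assoc, mul_right_inj' four_ne_zero]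
  · rw [if_neg h4, if_neg]
    rintro ⟨k, rfl⟩
    exact h4 ⟨3 * (2 * k + 1) ^ 2, by ring⟩

end PowerSeries

theorem Finset.card_filter_fixed_eq_card_zmod_two {α : Type*} [DecidableEq α] (s : Finset α)
    (σ : α → α) (hσs : ∀ x ∈ s, σ x ∈ s) (hσσ : ∀ x ∈ s, σ (σ x) = x) :
    ((s.filter fun x => σ x = x).card : ZMod 2) = s.card := by
  have hmoved : ((s.filter fun x => σ x ≠ x).card : ZMod 2) = 0 := by
    rw [Finset.card_eq_sum_ones, Nat.cast_sum, Nat.cast_one]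
    refine Finset.sum_involution (fun x _ => σ x) (fun _ _ => CharTwo.add_self_eq_zero 1)
      (fun x hx _ => (Finset.mem_filter.1 hx).2) (fun x hx => ?_) (fun x hx => ?_)
    · obtain ⟨hxs, hx⟩ := Finset.mem_filter.1 hx
      exact Finset.mem_filter.2 ⟨hσs x hxs, fun h => hx ((hσσ x hxs).symm.trans h).symm⟩
    · exact hσσ x (Finset.mem_filter.1 hx).1
  rw [← Finset.card_filter_add_card_filter_not (s := s) (p := fun x => σ x = x), Nat.cast_add,
    hmoved, add_zero]

def oddReps (n : ℕ) : Finset (ℕ × ℕ) :=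
  (Finset.range (n + 1) ×ˢ Finset.range (n + 1)).filter
    fun p => Odd p.1 ∧ Odd p.2 ∧ p.1 ^ 2 + 3 * p.2 ^ 2 = n

theorem mem_oddReps {n : ℕ} {p : ℕ × ℕ} :
    p ∈ oddReps n ↔ Odd p.1 ∧ Odd p.2 ∧ p.1 ^ 2 + 3 * p.2 ^ 2 = n := by
  simp only [oddReps, Finset.mem_filter, Finset.mem_product, Finset.mem_range,
    and_iff_right_iff_imp]
  rintro ⟨-, -, rfl⟩
  constructor <;> nlinarith

/-- Multiplication of `a + b√-3` by the sixth root of unity `(1 ± √-3) / 2`, followed by taking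
absolute values; the sign is chosen so that both coordinates stay odd. -/
def rotateRep (p : ℕ × ℕ) : ℕ × ℕ :=
  if (p.1 + p.2) % 4 = 2 then (((p.1 : ℤ) - 3 * p.2).natAbs / 2, (p.1 + p.2) / 2)
  else ((p.1 + 3 * p.2) / 2, ((p.1 : ℤ) - p.2).natAbs / 2)

section RotateRep

variable {a b : ℕ}

theorem odd_rotateRep (ha : Odd a) (hb : Odd b) :
    Odd (rotateRep (a, b)).1 ∧ Odd (rotateRep (a, b)).2 := by
  rw [Nat.odd_iff] at ha hb
  simp only [rotateRep, Nat.odd_iff]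
  split_ifs <;> omega

theorem norm_rotateRep (ha : Odd a) (hb : Odd b) :
    (rotateRep (a, b)).1 ^ 2 + 3 * (rotateRep (a, b)).2 ^ 2 = a ^ 2 + 3 * b ^ 2 := by
  rw [Nat.odd_iff] at ha hb
  simp only [rotateRep]
  split_ifs
  · obtain h₁ | h₁ : 2 * ((((a : ℤ) - 3 * b).natAbs / 2 : ℕ) : ℤ) = a - 3 * b ∨
        2 * ((((a : ℤ) - 3 * b).natAbs / 2 : ℕ) : ℤ) = 3 * b - a := by omega
    all_goals
      have h₂ : 2 * (((a + b) / 2 : ℕ) : ℤ) = a + b := by omega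
      generalize ((a : ℤ) - 3 * b).natAbs / 2 = x at h₁ ⊢
      generalize (a + b) / 2 = y at h₂ ⊢
      zify
      nlinarith
  · obtain h₂ | h₂ : 2 * ((((a : ℤ) - b).natAbs / 2 : ℕ) : ℤ) = a - b ∨
        2 * ((((a : ℤ) - b).natAbs / 2 : ℕ) : ℤ) = b - a := by omega
    all_goals
      have h₁ : 2 * (((a + 3 * b) / 2 : ℕ) : ℤ) = a + 3 * b := by omega
      generalize ((a : ℤ) - b).natAbs / 2 = y at h₂ ⊢
      generalize (a + 3 * b) / 2 = x at h₁ ⊢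
      zify
      nlinarith

theorem rotateRep_rotateRep (ha : Odd a) (hb : Odd b) : rotateRep (rotateRep (a, b)) = (a, b) := by
  rw [Nat.odd_iff] at ha hb
  simp only [rotateRep]
  split_ifs <;> simp only [Prod.mk.injEq] <;> omega

theorem rotateRep_eq_self_iff (ha : Odd a) (hb : Odd b) :
    rotateRep (a, b) = (a, b) ↔ a = b ∨ a = 3 * b := by
  rw [Nat.odd_iff] at ha hb
  simp only [rotateRep]
  split_ifs <;> simp only [Prod.mk.injEq] <;> omega

end RotateRep

theorem card_oddReps_filter_fst_eq_mul_snd {c : ℕ} (hc : Odd c) (n : ℕ) :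
    ((oddReps n).filter fun p => p.1 = c * p.2).card =
      if ∃ k, n = (c ^ 2 + 3) * (2 * k + 1) ^ 2 then 1 else 0 := by
  split_ifs with h
  · obtain ⟨k, rfl⟩ := h
    rw [Finset.card_eq_one]
    refine ⟨(c * (2 * k + 1), 2 * k + 1), Finset.ext fun ⟨a, b⟩ => ?_⟩
    simp only [Finset.mem_filter, mem_oddReps, Finset.mem_singleton, Prod.mk.injEq]
    constructor
    · rintro ⟨⟨-, -, hn⟩, rfl⟩
      have hb : b ^ 2 = (2 * k + 1) ^ 2 :=
        Nat.eq_of_mul_eq_mul_left (by positivity : 0 < c ^ 2 + 3) (by linarith)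
      rw [Nat.pow_left_injective two_ne_zero hb]
      exact ⟨rfl, rfl⟩
    · rintro ⟨rfl, rfl⟩
      exact ⟨⟨hc.mul (odd_two_mul_add_one k), odd_two_mul_add_one k, by ring⟩, rfl⟩
  · rw [Finset.card_eq_zero, Finset.filter_eq_empty_iff]
    rintro ⟨a, b⟩ hp (hab : a = c * b)
    subst hab
    obtain ⟨-, ⟨k, rfl⟩, hn⟩ := mem_oddReps.1 hp
    exact h ⟨k, by rw [← hn]; ring⟩

theorem card_oddReps_zmod_two (n : ℕ) :
    ((oddReps n).card : ZMod 2) = (if ∃ k, n = 4 * (2 * k + 1) ^ 2 then 1 else 0) +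
      (if ∃ k, n = 12 * (2 * k + 1) ^ 2 then 1 else 0) := by
  have hfixed : (oddReps n).filter (fun p => rotateRep p = p) =
      (oddReps n).filter (fun p => p.1 = 1 * p.2) ∪
        (oddReps n).filter (fun p => p.1 = 3 * p.2) := by
    rw [← Finset.filter_or]
    refine Finset.filter_congr fun ⟨a, b⟩ hp => ?_
    obtain ⟨ha, hb, -⟩ := mem_oddReps.1 hp
    rw [rotateRep_eq_self_iff ha hb, one_mul]
  have hdisj : Disjoint ((oddReps n).filter (fun p => p.1 = 1 * p.2))
      ((oddReps n).filter (fun p => p.1 = 3 * p.2)) := by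
    refine Finset.disjoint_filter.2 fun p hp h₁ h₃ => ?_
    obtain ⟨-, hb, -⟩ := mem_oddReps.1 hp
    exact hb.pos.ne' (by omega)
  rw [← Finset.card_filter_fixed_eq_card_zmod_two (oddReps n) rotateRep, hfixed,
    Finset.card_union_of_disjoint hdisj, card_oddReps_filter_fst_eq_mul_snd odd_one,
    card_oddReps_filter_fst_eq_mul_snd (by decide : Odd 3)]
  · push_cast
    norm_num
  · rintro ⟨a, b⟩ hp
    obtain ⟨ha, hb, rfl⟩ := mem_oddReps.1 hp
    exact mem_oddReps.2 ⟨(odd_rotateRep ha hb).1, (odd_rotateRep ha hb).2, norm_rotateRep ha hb⟩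
  · rintro ⟨a, b⟩ hp
    obtain ⟨ha, hb, -⟩ := mem_oddReps.1 hp
    exact rotateRep_rotateRep ha hb

theorem coeff_F_mul_G (n : ℕ) : PowerSeries.coeff n (F * G) = (oddReps n).card := by
  simp only [PowerSeries.coeff_mul, F, G, PowerSeries.coeff_mk, ite_zero_mul_ite_zero, mul_one]
  rw [Finset.sum_boole]
  congr 1
  symm
  refine Finset.card_bij (fun p _ => (p.1 ^ 2, 3 * p.2 ^ 2)) (fun ⟨a, b⟩ hp => ?_)
    (fun ⟨a, b⟩ _ ⟨a', b'⟩ _ h => ?_) (fun ⟨i, j⟩ hij => ?_)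
  · obtain ⟨⟨j, rfl⟩, ⟨k, rfl⟩, hn⟩ := mem_oddReps.1 hp
    simp only [Finset.mem_filter, Finset.HasAntidiagonal.mem_antidiagonal]
    exact ⟨hn, ⟨j, rfl⟩, ⟨k, rfl⟩⟩
  · obtain ⟨h₁, h₂⟩ := Prod.mk.inj h
    rw [Prod.mk.injEq]
    exact ⟨Nat.pow_left_injective two_ne_zero h₁,
      Nat.pow_left_injective two_ne_zero (Nat.eq_of_mul_eq_mul_left three_pos h₂)⟩
  · simp only [Finset.mem_filter, Finset.HasAntidiagonal.mem_antidiagonal] at hij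
    obtain ⟨hn, ⟨j, rfl⟩, ⟨k, rfl⟩⟩ := hij
    exact ⟨(2 * j + 1, 2 * k + 1),
      mem_oddReps.2 ⟨odd_two_mul_add_one j, odd_two_mul_add_one k, hn⟩, rfl⟩

theorem F_mul_G : F * G = F ^ 4 + G ^ 4 := by
  ext n
  rw [map_add, coeff_F_mul_G, card_oddReps_zmod_two, coeff_F_pow_four, coeff_G_pow_four]

theorem F_add_G_pow_four : (F + G) ^ 4 = F * G := by
  have : CharP (PowerSeries (ZMod 2)) 2 := charP_of_injective_algebraMap' (ZMod 2) 2
  rw [F_mul_G, show 4 = 2 ^ 2 from rfl, add_pow_char_pow]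

open PowerSeries in
theorem PowerSeries.transcendental_of_constantCoeff_eq_zero {R : Type*} [CommRing R] [IsDomain R]
    {φ : R⟦X⟧} (h₀ : constantCoeff φ = 0) (hφ : φ ≠ 0) : Transcendental R φ := by
  rintro ⟨p, hp, hpφ⟩
  obtain ⟨q, hpq, hq⟩ := p.exists_eq_pow_rootMultiplicity_mul_and_not_dvd hp 0
  rw [map_zero, sub_zero, Polynomial.X_dvd_iff] at hq
  have hqφ : constantCoeff (Polynomial.aeval φ q) = q.coeff 0 := by
    rw [Polynomial.aeval_def, Polynomial.hom_eval₂, h₀, Polynomial.eval₂_at_zero]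
    simp
  rw [hpq, map_zero, sub_zero, map_mul, map_pow, Polynomial.aeval_X] at hpφ
  refine (mul_ne_zero (pow_ne_zero _ hφ) fun h => hq ?_) hpφ
  rw [← hqφ, h, map_zero]

theorem G_ne_zero : G ≠ 0 := by
  intro h
  have h3 := congrArg (PowerSeries.coeff 3) h
  rw [G, PowerSeries.coeff_mk, if_pos ⟨0, rfl⟩, map_zero] at h3
  exact one_ne_zero h3

theorem constantCoeff_G : PowerSeries.constantCoeff G = 0 := by
  rw [← PowerSeries.coeff_zero_eq_constantCoeff_apply, G, PowerSeries.coeff_mk, if_neg]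
  rintro ⟨k, hk⟩
  have : 0 < 3 * (2 * k + 1) ^ 2 := by positivity
  omega

theorem transcendental_G' : Transcendental (ZMod 2) G' :=
  (transcendental_algebraMap_iff (IsFractionRing.injective _ K)).2
    (PowerSeries.transcendental_of_constantCoeff_eq_zero constantCoeff_G G_ne_zero)

theorem adjoin_G'_toSubfield : (IntermediateField.adjoin (ZMod 2) {G'}).toSubfield = E := by
  rw [IntermediateField.adjoin_toSubfield, Subfield.closure_union, E, sup_eq_right,
    Subfield.closure_le]
  rintro _ ⟨x, rfl⟩
  rw [← ZMod.natCast_zmod_val x, map_natCast]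
  exact natCast_mem _ _

noncomputable def ratFuncEquivE : RatFunc (ZMod 2) ≃+* E :=
  (RatFunc.algEquivOfTranscendental G' transcendental_G').toRingEquiv.trans
    (RingEquiv.subfieldCongr adjoin_G'_toSubfield)

theorem ratFuncEquivE_X : ratFuncEquivE RatFunc.X = g :=
  Subtype.ext (RatFunc.algEquivOfTranscendental_X G' transcendental_G')

section Quartic

open Polynomial

theorem Polynomial.Monic.eq_X_sq_add_C_mul_X_add_C {R : Type*} [Semiring R] {p : R[X]}
    (hm : p.Monic) (hnd : p.natDegree = 2) : p = X ^ 2 + C (p.coeff 1) * X + C (p.coeff 0) := by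
  conv_lhs => rw [p.as_sum_range_C_mul_X_pow, hnd]
  rw [Finset.sum_range_succ, Finset.sum_range_succ, Finset.sum_range_one, ← hnd,
    hm.coeff_natDegree, hnd, C_1, one_mul, pow_one, pow_zero, mul_one]
  abel

theorem irreducible_X_pow_four_add_X_add_one : Irreducible (X ^ 4 + X + 1 : (ZMod 2)[X]) := by
  have hm : (X ^ 4 + X + 1 : (ZMod 2)[X]).Monic := by monicity!
  have hdeg : (X ^ 4 + X + 1 : (ZMod 2)[X]).natDegree = 4 := by compute_degree!
  refine hm.irreducible_iff_natDegree'.2 ⟨fun h => by simp [h] at hdeg, fun f g hf hg hfg hdg => ?_⟩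
  rw [hdeg, Finset.mem_Ioc] at hdg
  have hsum : f.natDegree + g.natDegree = 4 := by rw [← hf.natDegree_mul hg, hfg, hdeg]
  have hnoroot : ∀ x : ZMod 2, x ^ 4 + x + 1 ≠ 0 := by decide
  obtain hg₁ | hg₂ : g.natDegree = 1 ∨ g.natDegree = 2 := by omega
  · have hg' := hg.eq_X_add_C hg₁
    generalize g.coeff 0 = a at hg'
    subst hg'
    have hroot := congrArg (eval (-a)) hfg
    simp only [eval_mul, eval_add, eval_X, eval_C, neg_add_cancel, mul_zero, eval_pow,
      eval_one] at hroot
    exact hnoroot (-a) hroot.symm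
  · rw [hf.eq_X_sq_add_C_mul_X_add_C (by omega), hg.eq_X_sq_add_C_mul_X_add_C hg₂] at hfg
    generalize f.coeff 1 = a, f.coeff 0 = b, g.coeff 1 = c, g.coeff 0 = d at hfg
    have hprod : (X ^ 2 + C a * X + C b) * (X ^ 2 + C c * X + C d) =
        X ^ 4 + C (a + c) * X ^ 3 + C (b + d + a * c) * X ^ 2 + C (a * d + b * c) * X +
          C (b * d) := by
      simp only [map_add, map_mul]
      ring
    rw [hprod] at hfg
    have h₀ := congrArg (coeff · 0) hfg
    have h₁ := congrArg (coeff · 1) hfg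
    have h₃ := congrArg (coeff · 3) hfg
    simp only [coeff_add, coeff_C_mul, coeff_X_pow, coeff_X, coeff_C, coeff_one] at h₀ h₁ h₃
    norm_num at h₀ h₁ h₃
    obtain ⟨rfl, rfl⟩ := h₀
    rw [mul_one, one_mul, h₃] at h₁
    exact zero_ne_one h₁

noncomputable def quartic {R : Type*} [CommRing R] (t : R) : R[X] := (X + C t) ^ 4 - X * C t

theorem map_quartic {R S : Type*} [CommRing R] [CommRing S] (f : R →+* S) (t : R) :
    (quartic t).map f = quartic (f t) := by
  simp [quartic]

theorem monic_quartic {R : Type*} [CommRing R] [Nontrivial R] (t : R) : (quartic t).Monic := by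
  unfold quartic
  monicity!

theorem irreducible_quartic_X : Irreducible (quartic (X : (ZMod 2)[X])) := by
  refine (monic_quartic _).irreducible_of_irreducible_map (evalRingHom 1) _ ?_
  rw [map_quartic, coe_evalRingHom, eval_X]
  convert irreducible_X_pow_four_add_X_add_one using 1
  rw [quartic, map_one, mul_one]
  ring_nf
  reduce_mod_char

theorem irreducible_quartic_ratFunc_X : Irreducible (quartic (RatFunc.X : RatFunc (ZMod 2))) := by
  rw [← RatFunc.algebraMap_X, ← map_quartic,
    ← (monic_quartic _).irreducible_iff_irreducible_map_fraction_map]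
  exact irreducible_quartic_X

theorem irreducible_quartic_g : Irreducible (quartic g) := by
  rw [← ratFuncEquivE_X, ← RingEquiv.coe_toRingHom, ← map_quartic, ← mapEquiv_apply,
    MulEquiv.irreducible_iff]
  exact irreducible_quartic_ratFunc_X

theorem aeval_F'_quartic_g : aeval F' (quartic g) = 0 := by
  have h := congrArg (algebraMap (PowerSeries (ZMod 2)) K) F_add_G_pow_four
  rw [map_pow, map_add, map_mul] at h
  simp only [quartic, map_sub, map_pow, map_add, map_mul, aeval_X, aeval_C]
  exact sub_eq_zero.2 h

end Quartic

open Polynomial in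
/-- The minimal polynomial of `F` over `(Z/2)(G)` is `(X+G)^4 - XG`, which is
irreducible; in particular `F` has degree 4 over `(Z/2)(G)`. -/
theorem stmt_2 :
    Irreducible ((X + C g) ^ 4 - X * C g) ∧
    minpoly E F' = (X + C g) ^ 4 - X * C g :=
  ⟨irreducible_quartic_g,
    (minpoly.eq_of_irreducible_of_monic irreducible_quartic_g aeval_F'_quartic_g
      (monic_quartic g)).symm⟩
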